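/- Let α₁, α₂, α₃ ∈ (0,1] with α₁+α₂+α₃ > 2. If λ and μ are both conformal densities of constant curvature −1 on ℂ'' = ℂ∖{0,1} with singularities of order α₁ at 0, α₂ at 1 and α₃ at ∞, then λ = μ on ℂ''. (That is, the generalized hyperbolic density of order (α₁,α₂,α₃) is unique.) -/

import Mathlib

open Complex Real Set Filter

/-- The Euclidean Laplacian `Δ = ∂²/∂x² + ∂²/∂y²` of a function `u : ℂ → ℝ`, computed as the
sum of the second directional derivatives in the directions `1` and `I`. -/
noncomputable def laplacian (u : ℂ → ℝ) (z : ℂ) : ℝ :=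
  fderiv ℝ (fun w => fderiv ℝ u w 1) z 1 +
    fderiv ℝ (fun w => fderiv ℝ u w Complex.I) z Complex.I

/-- `lam` is a conformal density of constant curvature `-1` on the open set `Ω`:
it is positive, twice continuously differentiable and satisfies `Δ (log lam) = lam ^ 2`. -/
def IsConfDensityNegOne (lam : ℂ → ℝ) (Ω : Set ℂ) : Prop :=
  IsOpen Ω ∧ ContDiffOn ℝ 2 lam Ω ∧
    ∀ z ∈ Ω, 0 < lam z ∧ laplacian (fun w => Real.log (lam w)) z = lam z ^ 2

/-- `lam` has a singularity of order `α ≤ 1` at the point `p`: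
`log lam z + α log |z - p|` (for `α < 1`), resp.
`log lam z + log |z - p| + log (-log |z - p|)` (for `α = 1`), stays bounded near `p`. -/
def HasSingOrderAt (lam : ℂ → ℝ) (α : ℝ) (p : ℂ) : Prop :=
  (α < 1 ∧ ∃ C > (0:ℝ), ∃ ε > (0:ℝ), ∀ z : ℂ, z ≠ p → ‖z - p‖ < ε →
      |Real.log (lam z) + α * Real.log (‖z - p‖)| ≤ C) ∨
  (α = 1 ∧ ∃ C > (0:ℝ), ∃ ε > (0:ℝ), ∀ z : ℂ, z ≠ p → ‖z - p‖ < ε →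
      |Real.log (lam z) + Real.log (‖z - p‖) +
        Real.log (-Real.log (‖z - p‖))| ≤ C)

/-- `lam` has a singularity of order `α` at `∞`, i.e. `z ↦ lam (1/z) / |z|²` has a
singularity of order `α` at `0`. -/
def HasSingOrderAtInf (lam : ℂ → ℝ) (α : ℝ) : Prop :=
  HasSingOrderAt (fun z => lam (1 / z) / ‖z‖ ^ 2) α 0

/-- `lam` is a (the) generalized hyperbolic density of order `(a1, a2, a3)` on `ℂ ∖ {0,1}`. -/
def IsGenHypDensity (a1 a2 a3 : ℝ) (lam : ℂ → ℝ) : Prop :=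
  IsConfDensityNegOne lam ({0, 1} : Set ℂ)ᶜ ∧
    HasSingOrderAt lam a1 0 ∧ HasSingOrderAt lam a2 1 ∧ HasSingOrderAtInf lam a3

/-- The generalized curvature of an upper semicontinuous density `mu` at `z`. -/
noncomputable def genCurvature (mu : ℂ → ℝ) (z : ℂ) : ℝ :=
  -(Filter.liminf (fun r : ℝ =>
      (4 / r ^ 2) * ((1 / (2 * Real.pi)) *
          (∫ t in (0:ℝ)..(2 * Real.pi),
            Real.log (mu (z + r * Complex.exp (t * Complex.I)))) -
        Real.log (mu z))) (nhdsWithin 0 (Set.Ioi 0))) / mu z ^ 2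

/-- `mu` is an SK-metric density on the open set `G`: upper semicontinuous, nonnegative, with
generalized curvature at most `-1` wherever it is positive. -/
def IsSKDensity (mu : ℂ → ℝ) (G : Set ℂ) : Prop :=
  IsOpen G ∧ UpperSemicontinuousOn mu G ∧ (∀ z ∈ G, 0 ≤ mu z) ∧
    ∀ z ∈ G, 0 < mu z → genCurvature mu z ≤ -1

/-- The Gauss hypergeometric series `F(a,b,c;z) = Σ (a)ₙ(b)ₙ/((c)ₙ n!) zⁿ`. -/
noncomputable def hypF (a b c : ℝ) (z : ℂ) : ℂ :=
  ∑' n : ℕ, ((ascPochhammer ℂ n).eval (a : ℂ) * (ascPochhammer ℂ n).eval (b : ℂ) /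
      ((ascPochhammer ℂ n).eval (c : ℂ) * (n.factorial : ℂ))) * z ^ n

/-- The class `𝓜_{j,k,l}` of meromorphic functions on the open unit disk all of whose zeros
have order at least `j`, all zeros of `f - 1` have order at least `k`, and all poles have
order at least `l`. -/
def MeroClass (j k l : ℕ) (f : ℂ → ℂ) : Prop :=
  ∃ (hf : MeromorphicOn f (Metric.ball (0:ℂ) 1))
    (hf1 : MeromorphicOn (fun z => f z - 1) (Metric.ball (0:ℂ) 1)),
    (∀ z, ∀ hz : z ∈ Metric.ball (0:ℂ) 1,
        0 < meromorphicOrderAt f z → ((j : ℤ) : WithTop ℤ) ≤ meromorphicOrderAt f z) ∧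
    (∀ z, ∀ hz : z ∈ Metric.ball (0:ℂ) 1,
        0 < meromorphicOrderAt (fun w => f w - 1) z → ((k : ℤ) : WithTop ℤ) ≤ meromorphicOrderAt (fun w => f w - 1) z) ∧
    (∀ z, ∀ hz : z ∈ Metric.ball (0:ℂ) 1,
        meromorphicOrderAt f z < 0 → meromorphicOrderAt f z ≤ ((-(l : ℤ)) : WithTop ℤ))

/-- The inverse hyperbolic tangent. -/
noncomputable def arctanh (x : ℝ) : ℝ := (1 / 2) * Real.log ((1 + x) / (1 - x))

/-- `log⁺ x = max (log x) 0`. -/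
noncomputable def logPlus (x : ℝ) : ℝ := max (Real.log x) 0

/-!
Write `u = log λ - log μ`. Since `Δ log λ = λ²` and `Δ log μ = μ²`, at a maximum of `u` we get
`0 ≥ Δu = λ² - μ² ≥ 2 μ² u`, so `u ≤ 0` there. The maximum need not exist, so `u` is perturbed by
`δ b` with the barrier `b z = log |z|² + log |z - 1|² - 3 log (1 + |z|²)`: it tends to `-∞` at
`0`, `1` and `∞`, while `u` stays bounded above there because `λ` and `μ` have the same
singularities. Hence `u + δ b` has a maximum `z_m`, where, as `Δb = -12 / (1 + |z|²)²`,
`2 μ² u ≤ 12 δ / (1 + |z|²)²`. Positive orders make `μ (1 + |z|²)` bounded below by some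
`c > 0`, so `u (z_m) ≤ 6 δ / c²`. As `u z₀ ≤ u z_m + δ (log 2 - b z₀)` for every `z₀`, letting
`δ → 0` shows `λ ≤ μ`, and symmetry gives equality.
-/

open Topology
open scoped InnerProductSpace

lemma two_mul_sq_mul_log_sub_le_sq_sub_sq {a b : ℝ} (ha : 0 < a) (hb : 0 < b) :
    2 * b ^ 2 * (Real.log a - Real.log b) ≤ a ^ 2 - b ^ 2 := by
  have hexp : Real.exp (2 * (Real.log a - Real.log b)) = a ^ 2 / b ^ 2 := by
    rw [two_mul, Real.exp_add, Real.exp_sub, Real.exp_log ha, Real.exp_log hb]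
    ring
  have h := Real.add_one_le_exp (2 * (Real.log a - Real.log b))
  rw [hexp, le_div_iff₀ (by positivity)] at h
  linarith

section SecondDerivative

variable {E : Type*} [NormedAddCommGroup E] [NormedSpace ℝ E] {f g : E → ℝ} {z : E}

lemma deriv_deriv_nonpos_of_isLocalMax {φ : ℝ → ℝ} {t : ℝ} (hmax : IsLocalMax φ t)
    (hφ : ContinuousAt φ t) : deriv (deriv φ) t ≤ 0 := by
  by_contra! hpos
  -- the second derivative test makes `t` a local minimum as well, so `φ` is locally constant
  have hmin := isLocalMin_of_deriv_deriv_pos hpos hmax.deriv_eq_zero hφ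
  have hconst : φ =ᶠ[𝓝 t] fun _ => φ t := (hmax.and hmin).mono fun _ h => le_antisymm h.1 h.2
  have hderiv : deriv φ =ᶠ[𝓝 t] fun _ => 0 :=
    hconst.eventually_nhds.mono fun s hs => by simp [Filter.EventuallyEq.deriv_eq hs]
  simp [hderiv.deriv_eq] at hpos

lemma ContDiffAt.differentiableAt_fderiv_apply (hf : ContDiffAt ℝ 2 f z) (v : E) :
    DifferentiableAt ℝ (fun w => fderiv ℝ f w v) z :=
  ((hf.fderiv_right (by norm_num)).differentiableAt one_ne_zero).clm_apply
    (differentiableAt_const v)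

lemma ContDiffAt.fderiv_fderiv_apply_eq_deriv_deriv (hf : ContDiffAt ℝ 2 f z) (v : E) :
    fderiv ℝ (fun w => fderiv ℝ f w v) z v = deriv (deriv fun t : ℝ => f (z + t • v)) 0 := by
  have hline (t : ℝ) : HasDerivAt (fun s : ℝ => z + s • v) v t := by
    simpa using ((hasDerivAt_id t).smul_const v).const_add z
  have hcont : Tendsto (fun s : ℝ => z + s • v) (𝓝 0) (𝓝 z) := by
    simpa using (hline 0).continuousAt.tendsto
  have hderiv : deriv (fun t : ℝ => f (z + t • v)) =ᶠ[𝓝 0] fun t => fderiv ℝ f (z + t • v) v := by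
    filter_upwards [hcont.eventually (hf.eventually (by simp))] with t ht
    exact ((ht.differentiableAt two_ne_zero).hasFDerivAt.comp_hasDerivAt t (hline t)).deriv
  rw [hderiv.deriv_eq]
  have hF : HasFDerivAt (fun w => fderiv ℝ f w v) (fderiv ℝ (fun w => fderiv ℝ f w v) z)
      (z + (0 : ℝ) • v) := by
    rw [zero_smul, add_zero]
    exact (hf.differentiableAt_fderiv_apply v).hasFDerivAt
  exact (hF.comp_hasDerivAt 0 (hline 0)).deriv.symm

lemma ContDiffAt.fderiv_fderiv_apply_nonpos_of_isLocalMax (hf : ContDiffAt ℝ 2 f z)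
    (hmax : IsLocalMax f z) (v : E) : fderiv ℝ (fun w => fderiv ℝ f w v) z v ≤ 0 := by
  have hline : Continuous fun t : ℝ => z + t • v := by fun_prop
  rw [hf.fderiv_fderiv_apply_eq_deriv_deriv]
  refine deriv_deriv_nonpos_of_isLocalMax ?_ ?_
  · have hmax' : IsLocalMax f (z + (0 : ℝ) • v) := by rwa [zero_smul, add_zero]
    exact hmax'.comp_continuous (g := fun t : ℝ => z + t • v) (b := 0) hline.continuousAt
  · have hcont : ContinuousAt f (z + (0 : ℝ) • v) := by
      rw [zero_smul, add_zero]
      exact hf.continuousAt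
    exact hcont.comp (f := fun t : ℝ => z + t • v) (x := 0) hline.continuousAt

lemma ContDiffAt.fderiv_fderiv_apply_add (hf : ContDiffAt ℝ 2 f z) (hg : ContDiffAt ℝ 2 g z)
    (v : E) : fderiv ℝ (fun w => fderiv ℝ (fun y => f y + g y) w v) z v =
      fderiv ℝ (fun w => fderiv ℝ f w v) z v + fderiv ℝ (fun w => fderiv ℝ g w v) z v := by
  have hev : (fun w => fderiv ℝ (fun y => f y + g y) w v) =ᶠ[𝓝 z]
      fun w => fderiv ℝ f w v + fderiv ℝ g w v := by
    filter_upwards [hf.eventually (by simp), hg.eventually (by simp)] with w hfw hgw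
    rw [fderiv_fun_add (hfw.differentiableAt two_ne_zero) (hgw.differentiableAt two_ne_zero)]
    rfl
  rw [hev.fderiv_eq, fderiv_fun_add (hf.differentiableAt_fderiv_apply v)
    (hg.differentiableAt_fderiv_apply v)]
  rfl

lemma ContDiffAt.fderiv_fderiv_apply_const_mul (hf : ContDiffAt ℝ 2 f z) (c : ℝ) (v : E) :
    fderiv ℝ (fun w => fderiv ℝ (fun y => c * f y) w v) z v =
      c * fderiv ℝ (fun w => fderiv ℝ f w v) z v := by
  have hev : (fun w => fderiv ℝ (fun y => c * f y) w v) =ᶠ[𝓝 z]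
      fun w => c * fderiv ℝ f w v := by
    filter_upwards [hf.eventually (by simp)] with w hfw
    rw [fderiv_const_mul (hfw.differentiableAt two_ne_zero)]
    rfl
  rw [hev.fderiv_eq, fderiv_const_mul (hf.differentiableAt_fderiv_apply v)]
  rfl

end SecondDerivative

section LogNormSq

variable {E : Type*} [NormedAddCommGroup E] [InnerProductSpace ℝ E] {p z : E} {c : ℝ}

lemma hasFDerivAt_norm_sub_sq_add (w : E) :
    HasFDerivAt (fun y => ‖y - p‖ ^ 2 + c) (2 • innerSL ℝ (w - p)) w := by
  simpa using ((hasFDerivAt_id w).sub_const p).norm_sq.add_const c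

lemma contDiffAt_log_norm_sub_sq_add {n : WithTop ℕ∞} (h : ‖z - p‖ ^ 2 + c ≠ 0) :
    ContDiffAt ℝ n (fun w => Real.log (‖w - p‖ ^ 2 + c)) z :=
  (((contDiff_norm_sq ℝ).comp (contDiff_id.sub contDiff_const)).add contDiff_const).contDiffAt.log h

lemma fderiv_fderiv_log_norm_sub_sq_add (h : 0 < ‖z - p‖ ^ 2 + c) (v : E) :
    fderiv ℝ (fun w => fderiv ℝ (fun y => Real.log (‖y - p‖ ^ 2 + c)) w v) z v =
      2 * ‖v‖ ^ 2 / (‖z - p‖ ^ 2 + c) - 4 * ⟪z - p, v⟫_ℝ ^ 2 / (‖z - p‖ ^ 2 + c) ^ 2 := by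
  have hfirst : (fun w => fderiv ℝ (fun y => Real.log (‖y - p‖ ^ 2 + c)) w v) =ᶠ[𝓝 z]
      fun w => 2 * ⟪w - p, v⟫_ℝ * (‖w - p‖ ^ 2 + c)⁻¹ := by
    filter_upwards [(hasFDerivAt_norm_sub_sq_add z).continuousAt.eventually (lt_mem_nhds h)]
      with w hw
    rw [((hasFDerivAt_norm_sub_sq_add w).log hw.ne').fderiv]
    simp only [map_sub, smul_apply, sub_apply, coe_innerSL_apply, nsmul_eq_mul, Nat.cast_ofNat,
      smul_eq_mul, inner_sub_left]
    ring
  have hnum : HasFDerivAt (fun w => 2 * ⟪w - p, v⟫_ℝ) ((2 : ℝ) • innerSL ℝ v) z := by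
    simpa [real_inner_comm] using
      ((innerSL ℝ v).hasFDerivAt.comp z ((hasFDerivAt_id z).sub_const p)).const_mul (2 : ℝ)
  have hinv := (hasDerivAt_inv h.ne').comp_hasFDerivAt z (hasFDerivAt_norm_sub_sq_add (c := c) z)
  have hsecond : HasFDerivAt (fun w => 2 * ⟪w - p, v⟫_ℝ * (‖w - p‖ ^ 2 + c)⁻¹) _ z :=
    hnum.mul hinv
  rw [hfirst.fderiv_eq, hsecond.fderiv]
  simp only [real_inner_comm, map_sub, neg_smul, smul_neg, add_apply, neg_apply, smul_apply,
    sub_apply, coe_innerSL_apply, nsmul_eq_mul, Nat.cast_ofNat, smul_eq_mul,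
    real_inner_self_eq_norm_sq]
  field_simp
  simp only [inner_sub_right, real_inner_comm z v, real_inner_comm p v]
  ring

end LogNormSq

section Laplacian

variable {f g : ℂ → ℝ} {p z : ℂ} {c : ℝ}

lemma laplacian_nonpos_of_isLocalMax (hf : ContDiffAt ℝ 2 f z) (hmax : IsLocalMax f z) :
    laplacian f z ≤ 0 :=
  add_nonpos (hf.fderiv_fderiv_apply_nonpos_of_isLocalMax hmax 1)
    (hf.fderiv_fderiv_apply_nonpos_of_isLocalMax hmax I)

lemma laplacian_add (hf : ContDiffAt ℝ 2 f z) (hg : ContDiffAt ℝ 2 g z) :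
    laplacian (fun w => f w + g w) z = laplacian f z + laplacian g z := by
  simp only [laplacian, hf.fderiv_fderiv_apply_add hg]
  ring

lemma laplacian_const_mul (hf : ContDiffAt ℝ 2 f z) (c : ℝ) :
    laplacian (fun w => c * f w) z = c * laplacian f z := by
  simp only [laplacian, hf.fderiv_fderiv_apply_const_mul]
  ring

lemma laplacian_sub (hf : ContDiffAt ℝ 2 f z) (hg : ContDiffAt ℝ 2 g z) :
    laplacian (fun w => f w - g w) z = laplacian f z - laplacian g z := by
  have hsub : (fun w => f w - g w) = fun w => f w + -1 * g w := by
    funext w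
    ring
  rw [hsub, laplacian_add hf (contDiffAt_const.mul hg), laplacian_const_mul hg]
  ring

lemma laplacian_log_norm_sub_sq_add (h : 0 < ‖z - p‖ ^ 2 + c) :
    laplacian (fun w => Real.log (‖w - p‖ ^ 2 + c)) z = 4 * c / (‖z - p‖ ^ 2 + c) ^ 2 := by
  have hnorm : ‖z - p‖ ^ 2 = (z - p).re ^ 2 + (z - p).im ^ 2 := by
    rw [Complex.sq_norm, Complex.normSq_apply]
    ring
  simp only [laplacian, fderiv_fderiv_log_norm_sub_sq_add h]
  simp only [Complex.inner, hnorm, norm_one, norm_I, one_pow, map_sub, conj_re, conj_im, mul_re,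
    I_re, I_im, sub_re, sub_im, mul_one, one_mul, zero_mul, zero_sub, sub_neg_eq_add, neg_add_rev,
    neg_neg]
  field_simp
  ring

end Laplacian

section Punctures

noncomputable def atPunctures : Filter ℂ := 𝓝[≠] 0 ⊔ 𝓝[≠] 1 ⊔ cocompact ℂ

lemma isBoundedUnder_atPunctures {r : ℝ → ℝ → Prop} [IsTrans ℝ r] [IsDirected ℝ r] {f : ℂ → ℝ}
    (h0 : IsBoundedUnder r (𝓝[≠] 0) f) (h1 : IsBoundedUnder r (𝓝[≠] 1) f)
    (hinf : IsBoundedUnder r (cocompact ℂ) f) : IsBoundedUnder r atPunctures f := by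
  unfold IsBoundedUnder atPunctures
  rw [map_sup, map_sup]
  exact isBounded_sup (isBounded_sup h0 h1) hinf

lemma eventually_cocompact_mem_compl : ∀ᶠ z in cocompact ℂ, z ∈ ({0, 1} : Set ℂ)ᶜ :=
  (Set.toFinite _).isCompact.compl_mem_cocompact

lemma exists_isCompact_union_of_mem_atPunctures {A : Set ℂ} (hA : A ∈ atPunctures) :
    ∃ K, IsCompact K ∧ K ⊆ ({0, 1} : Set ℂ)ᶜ ∧ ({0, 1} : Set ℂ)ᶜ ⊆ K ∪ A := by
  simp only [atPunctures, mem_sup] at hA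
  obtain ⟨⟨h0, h1⟩, hinf⟩ := hA
  obtain ⟨ε₀, hε₀, hball₀⟩ := Metric.mem_nhdsWithin_iff.1 h0
  obtain ⟨ε₁, hε₁, hball₁⟩ := Metric.mem_nhdsWithin_iff.1 h1
  obtain ⟨L, hL, hLA⟩ := mem_cocompact.1 hinf
  refine ⟨L \ (Metric.ball 0 ε₀ ∪ Metric.ball 1 ε₁),
    hL.diff (Metric.isOpen_ball.union Metric.isOpen_ball), ?_, ?_⟩
  · rintro z ⟨-, hz⟩ (rfl | rfl) <;> simp_all
  · intro z hz
    by_cases hzL : z ∈ L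
    · by_cases hz₀ : z ∈ Metric.ball 0 ε₀
      · exact Or.inr (hball₀ ⟨hz₀, fun h => hz (Or.inl h)⟩)
      by_cases hz₁ : z ∈ Metric.ball 1 ε₁
      · exact Or.inr (hball₁ ⟨hz₁, fun h => hz (Or.inr h)⟩)
      exact Or.inl ⟨hzL, by simp [hz₀, hz₁]⟩
    · exact Or.inr (hLA hzL)

lemma ContinuousOn.bddBelow_of_isBoundedUnder_atPunctures {f : ℂ → ℝ}
    (hf : ContinuousOn f ({0, 1} : Set ℂ)ᶜ) (h : IsBoundedUnder (· ≥ ·) atPunctures f) :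
    BddBelow (f '' ({0, 1} : Set ℂ)ᶜ) := by
  obtain ⟨b, hb⟩ := h.eventually_ge
  obtain ⟨K, hK, hKΩ, hΩ⟩ := exists_isCompact_union_of_mem_atPunctures hb
  obtain ⟨m, hm⟩ := hK.bddBelow_image (hf.mono hKΩ)
  refine ⟨min m b, ?_⟩
  rintro _ ⟨z, hz, rfl⟩
  rcases hΩ hz with hzK | hzb
  · exact (min_le_left m b).trans (hm ⟨z, hzK, rfl⟩)
  · exact (min_le_right m b).trans hzb

lemma ContinuousOn.exists_isMaxOn_of_tendsto_atPunctures {f : ℂ → ℝ}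
    (hf : ContinuousOn f ({0, 1} : Set ℂ)ᶜ) (h : Tendsto f atPunctures atBot) :
    ∃ zm ∈ ({0, 1} : Set ℂ)ᶜ, IsMaxOn f ({0, 1} : Set ℂ)ᶜ zm := by
  have h2 : (2 : ℂ) ∈ ({0, 1} : Set ℂ)ᶜ := by norm_num
  obtain ⟨K, hK, hKΩ, hΩ⟩ :=
    exists_isCompact_union_of_mem_atPunctures (h.eventually (eventually_lt_atBot (f 2)))
  have h2K : (2 : ℂ) ∈ K := (hΩ h2).resolve_right (lt_irrefl (f 2))
  obtain ⟨zm, hzmK, hmax⟩ := hK.exists_isMaxOn ⟨2, h2K⟩ (hf.mono hKΩ)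
  refine ⟨zm, hKΩ hzmK, fun z hz => ?_⟩
  have h2zm : f 2 ≤ f zm := hmax h2K
  rcases hΩ hz with hzK | hzA
  · exact hmax hzK
  · exact le_of_lt (lt_of_lt_of_le hzA h2zm)

end Punctures

section Barrier

noncomputable def barrier (z : ℂ) : ℝ :=
  Real.log (‖z‖ ^ 2) + Real.log (‖z - 1‖ ^ 2) - 3 * Real.log (‖z‖ ^ 2 + 1)

variable {z : ℂ}

lemma contDiffAt_barrier (h0 : z ≠ 0) (h1 : z ≠ 1) : ContDiffAt ℝ 2 barrier z := by
  have h1' : z - 1 ≠ 0 := sub_ne_zero.2 h1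
  have hA := contDiffAt_log_norm_sub_sq_add (n := 2) (p := 0) (c := 0) (z := z)
    (by rw [sub_zero, add_zero]; positivity)
  have hB := contDiffAt_log_norm_sub_sq_add (n := 2) (p := 1) (c := 0) (z := z)
    (by rw [add_zero]; positivity)
  have hC := contDiffAt_log_norm_sub_sq_add (n := 2) (p := 0) (c := 1) (z := z) (by positivity)
  unfold barrier
  simpa only [sub_zero, add_zero] using (hA.add hB).sub (contDiffAt_const.mul hC)

lemma laplacian_barrier (h0 : z ≠ 0) (h1 : z ≠ 1) :
    laplacian barrier z = -12 / (‖z‖ ^ 2 + 1) ^ 2 := by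
  have h1' : z - 1 ≠ 0 := sub_ne_zero.2 h1
  have hA' : 0 < ‖z - 0‖ ^ 2 + 0 := by rw [sub_zero, add_zero]; positivity
  have hB' : 0 < ‖z - 1‖ ^ 2 + 0 := by rw [add_zero]; positivity
  have hC' : 0 < ‖z - 0‖ ^ 2 + 1 := by positivity
  have hA := contDiffAt_log_norm_sub_sq_add (n := 2) hA'.ne'
  have hB := contDiffAt_log_norm_sub_sq_add (n := 2) hB'.ne'
  have hC := contDiffAt_log_norm_sub_sq_add (n := 2) hC'.ne'
  have hΔ := laplacian_sub (hA.add hB) ((contDiffAt_const (c := (3 : ℝ))).mul hC)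
  rw [laplacian_add hA hB, laplacian_const_mul hC, laplacian_log_norm_sub_sq_add hA',
    laplacian_log_norm_sub_sq_add hB', laplacian_log_norm_sub_sq_add hC'] at hΔ
  simp only [sub_zero, add_zero] at hΔ
  unfold barrier
  rw [hΔ]
  ring

lemma barrier_le (z : ℂ) : barrier z ≤ Real.log 2 - Real.log (‖z‖ ^ 2 + 1) := by
  have hlog_le {x y : ℝ} (hx : 0 ≤ x) (hxy : x ≤ y) (hy : 1 ≤ y) : Real.log x ≤ Real.log y := by
    rcases hx.eq_or_lt with rfl | hx
    · simpa using Real.log_nonneg hy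
    · exact Real.log_le_log hx hxy
  have hP : 1 ≤ ‖z‖ ^ 2 + 1 := by nlinarith [norm_nonneg z]
  have h0 : Real.log (‖z‖ ^ 2) ≤ Real.log (‖z‖ ^ 2 + 1) := hlog_le (by positivity) (by linarith) hP
  have h1 : Real.log (‖z - 1‖ ^ 2) ≤ Real.log 2 + Real.log (‖z‖ ^ 2 + 1) := by
    rw [← Real.log_mul two_ne_zero (by positivity)]
    refine hlog_le (by positivity) ?_ (by linarith)
    have h := norm_sub_le z 1
    rw [norm_one] at h
    calc ‖z - 1‖ ^ 2 ≤ (‖z‖ + 1) ^ 2 := pow_le_pow_left₀ (norm_nonneg _) h 2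
      _ ≤ 2 * (‖z‖ ^ 2 + 1) := by nlinarith [sq_nonneg (‖z‖ - 1)]
  unfold barrier
  linarith

lemma tendsto_log_norm_sub_sq_nhdsNE (p : ℂ) :
    Tendsto (fun z => Real.log (‖z - p‖ ^ 2)) (𝓝[≠] p) atBot := by
  simp only [Real.log_pow, Nat.cast_ofNat]
  exact (Real.tendsto_log_nhdsGT_zero.comp (tendsto_norm_sub_self_nhdsNE p)).const_mul_atBot
    two_pos

lemma tendsto_barrier_atPunctures : Tendsto barrier atPunctures atBot := by
  simp only [atPunctures, tendsto_sup]
  refine ⟨⟨?_, ?_⟩, ?_⟩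
  · have hrest : ContinuousAt
        (fun z : ℂ => Real.log (‖z - 1‖ ^ 2) - 3 * Real.log (‖z‖ ^ 2 + 1)) 0 := by
      fun_prop (disch := norm_num)
    refine ((tendsto_log_norm_sub_sq_nhdsNE 0).atBot_add
      (hrest.tendsto.mono_left nhdsWithin_le_nhds)).congr fun z => ?_
    simp only [barrier, sub_zero]
    ring
  · have hrest : ContinuousAt
        (fun z : ℂ => Real.log (‖z‖ ^ 2) - 3 * Real.log (‖z‖ ^ 2 + 1)) 1 := by
      fun_prop (disch := norm_num)
    refine ((tendsto_log_norm_sub_sq_nhdsNE 1).atBot_add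
      (hrest.tendsto.mono_left nhdsWithin_le_nhds)).congr fun z => ?_
    simp only [barrier]
    ring
  · have hP : Tendsto (fun z : ℂ => ‖z‖ ^ 2 + 1) (cocompact ℂ) atTop :=
      tendsto_atTop_add_const_right _ _
        ((tendsto_pow_atTop two_ne_zero).comp tendsto_norm_cocompact_atTop)
    have hlog : Tendsto (fun z : ℂ => Real.log 2 - Real.log (‖z‖ ^ 2 + 1)) (cocompact ℂ) atBot :=
      tendsto_atBot_add_const_left _ _
        (tendsto_neg_atTop_atBot.comp (Real.tendsto_log_atTop.comp hP))
    exact tendsto_atBot_mono barrier_le hlog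

end Barrier

section Singularity

variable {lam mu : ℂ → ℝ} {α : ℝ} {p z : ℂ}

noncomputable def singWeight (α : ℝ) (p z : ℂ) : ℝ :=
  if α < 1 then α * Real.log ‖z - p‖ else Real.log ‖z - p‖ + Real.log (-Real.log ‖z - p‖)

lemma HasSingOrderAt.isBoundedUnder_abs (h : HasSingOrderAt lam α p) :
    IsBoundedUnder (· ≤ ·) (𝓝[≠] p) fun z => |Real.log (lam z) + singWeight α p z| := by
  have hnear {ε : ℝ} (hε : 0 < ε) : ∀ᶠ z in 𝓝[≠] p, z ≠ p ∧ ‖z - p‖ < ε := by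
    filter_upwards [self_mem_nhdsWithin, nhdsWithin_le_nhds (Metric.ball_mem_nhds p hε)]
      with z hzp hz
    exact ⟨hzp, by rwa [← dist_eq_norm]⟩
  rcases h with ⟨hα, C, -, ε, hε, hC⟩ | ⟨rfl, C, -, ε, hε, hC⟩
  · refine isBoundedUnder_of_eventually_le (a := C) ?_
    filter_upwards [hnear hε] with z hz
    simpa only [singWeight, if_pos hα] using hC z hz.1 hz.2
  · refine isBoundedUnder_of_eventually_le (a := C) ?_
    filter_upwards [hnear hε] with z hz
    simpa only [singWeight, lt_irrefl, if_false, ← add_assoc] using hC z hz.1 hz.2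

lemma singWeight_nonpos (hα : 0 ≤ α) (hz : ‖z - p‖ ≤ 1) : singWeight α p z ≤ 0 := by
  have hlog : Real.log ‖z - p‖ ≤ 0 := Real.log_nonpos (norm_nonneg _) hz
  unfold singWeight
  split_ifs
  · exact mul_nonpos_of_nonneg_of_nonpos hα hlog
  · linarith [Real.log_le_self (neg_nonneg.2 hlog)]

lemma HasSingOrderAt.isBoundedUnder_log_sub (hl : HasSingOrderAt lam α p)
    (hm : HasSingOrderAt mu α p) :
    IsBoundedUnder (· ≤ ·) (𝓝[≠] p) fun z => Real.log (lam z) - Real.log (mu z) := by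
  obtain ⟨C, hC⟩ := hl.isBoundedUnder_abs.eventually_le
  obtain ⟨D, hD⟩ := hm.isBoundedUnder_abs.eventually_le
  refine isBoundedUnder_of_eventually_le (a := C + D) ?_
  filter_upwards [hC, hD] with z hCz hDz
  linarith [(abs_le.1 hCz).2, (abs_le.1 hDz).1]

lemma HasSingOrderAt.isBoundedUnder_log (hα : 0 ≤ α) (h : HasSingOrderAt mu α p) :
    IsBoundedUnder (· ≥ ·) (𝓝[≠] p) fun z => Real.log (mu z) := by
  obtain ⟨C, hC⟩ := h.isBoundedUnder_abs.eventually_le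
  refine isBoundedUnder_of_eventually_ge (a := -C) ?_
  filter_upwards [hC, nhdsWithin_le_nhds (Metric.closedBall_mem_nhds p one_pos)] with z hCz hz
  have hw := singWeight_nonpos hα (by rwa [Metric.mem_closedBall, dist_eq_norm] at hz)
  linarith [(abs_le.1 hCz).1]

lemma tendsto_inv_cocompact_nhdsNE : Tendsto (·⁻¹) (cocompact ℂ) (𝓝[≠] (0 : ℂ)) :=
  Metric.cobounded_eq_cocompact (α := ℂ) ▸ tendsto_inv₀_cobounded'

lemma HasSingOrderAtInf.isBoundedUnder_log_sub (hl : HasSingOrderAtInf lam α)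
    (hm : HasSingOrderAtInf mu α) :
    IsBoundedUnder (· ≤ ·) (cocompact ℂ)
      fun z => Real.log (lam z * ‖z‖ ^ 2) - Real.log (mu z * ‖z‖ ^ 2) := by
  simpa [Function.comp_def, div_eq_mul_inv] using
    tendsto_inv_cocompact_nhdsNE.isBoundedUnder_comp (HasSingOrderAt.isBoundedUnder_log_sub hl hm)

lemma HasSingOrderAtInf.isBoundedUnder_log (hα : 0 ≤ α) (h : HasSingOrderAtInf mu α) :
    IsBoundedUnder (· ≥ ·) (cocompact ℂ) fun z => Real.log (mu z * ‖z‖ ^ 2) := by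
  simpa [Function.comp_def, div_eq_mul_inv] using
    tendsto_inv_cocompact_nhdsNE.isBoundedUnder_comp (HasSingOrderAt.isBoundedUnder_log hα h)

end Singularity

section Comparison

variable {lam mu : ℂ → ℝ} {z : ℂ}

lemma IsConfDensityNegOne.contDiffAt_log {Ω : Set ℂ} (h : IsConfDensityNegOne lam Ω)
    (hz : z ∈ Ω) : ContDiffAt ℝ 2 (fun w => Real.log (lam w)) z :=
  (h.2.1.contDiffAt (h.1.mem_nhds hz)).log (h.2.2 z hz).1.ne'

lemma IsConfDensityNegOne.exists_pos_le_mul (hmu : IsConfDensityNegOne mu ({0, 1} : Set ℂ)ᶜ)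
    (h : IsBoundedUnder (· ≥ ·) atPunctures fun z => Real.log (mu z) + Real.log (‖z‖ ^ 2 + 1)) :
    ∃ c > 0, ∀ z ∈ ({0, 1} : Set ℂ)ᶜ, c ≤ mu z * (‖z‖ ^ 2 + 1) := by
  have hcont : ContinuousOn (fun z => Real.log (mu z) + Real.log (‖z‖ ^ 2 + 1))
      ({0, 1} : Set ℂ)ᶜ := fun z hz =>
    ((hmu.contDiffAt_log hz).continuousAt.add
      (by fun_prop (disch := positivity))).continuousWithinAt
  obtain ⟨m, hm⟩ := hcont.bddBelow_of_isBoundedUnder_atPunctures h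
  refine ⟨Real.exp m, Real.exp_pos m, fun z hz => ?_⟩
  have hmz : m ≤ Real.log (mu z * (‖z‖ ^ 2 + 1)) := by
    rw [Real.log_mul (hmu.2.2 z hz).1.ne' (by positivity)]
    exact hm ⟨z, hz, rfl⟩
  exact (Real.le_log_iff_exp_le (mul_pos (hmu.2.2 z hz).1 (by positivity))).1 hmz

lemma contDiffAt_log_sub_log_add_barrier (hlam : IsConfDensityNegOne lam ({0, 1} : Set ℂ)ᶜ)
    (hmu : IsConfDensityNegOne mu ({0, 1} : Set ℂ)ᶜ) (hz : z ∈ ({0, 1} : Set ℂ)ᶜ) (δ : ℝ) :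
    ContDiffAt ℝ 2 (fun w => Real.log (lam w) - Real.log (mu w) + δ * barrier w) z := by
  obtain ⟨h0, h1⟩ : z ≠ 0 ∧ z ≠ 1 := by simpa [not_or] using hz
  exact ((hlam.contDiffAt_log hz).sub (hmu.contDiffAt_log hz)).add
    (contDiffAt_const.mul (contDiffAt_barrier h0 h1))

lemma laplacian_log_sub_log_add_barrier (hlam : IsConfDensityNegOne lam ({0, 1} : Set ℂ)ᶜ)
    (hmu : IsConfDensityNegOne mu ({0, 1} : Set ℂ)ᶜ) (hz : z ∈ ({0, 1} : Set ℂ)ᶜ) (δ : ℝ) :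
    laplacian (fun w => Real.log (lam w) - Real.log (mu w) + δ * barrier w) z =
      lam z ^ 2 - mu z ^ 2 - 12 * δ / (‖z‖ ^ 2 + 1) ^ 2 := by
  obtain ⟨h0, h1⟩ : z ≠ 0 ∧ z ≠ 1 := by simpa [not_or] using hz
  have hlog_lam := hlam.contDiffAt_log hz
  have hlog_mu := hmu.contDiffAt_log hz
  rw [laplacian_add (hlog_lam.sub hlog_mu) (contDiffAt_const.mul (contDiffAt_barrier h0 h1)),
    laplacian_sub hlog_lam hlog_mu, laplacian_const_mul (contDiffAt_barrier h0 h1),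
    laplacian_barrier h0 h1, (hlam.2.2 z hz).2, (hmu.2.2 z hz).2]
  ring

lemma sq_mul_log_sub_log_le_of_isLocalMax (hlam : IsConfDensityNegOne lam ({0, 1} : Set ℂ)ᶜ)
    (hmu : IsConfDensityNegOne mu ({0, 1} : Set ℂ)ᶜ) (hz : z ∈ ({0, 1} : Set ℂ)ᶜ) {δ : ℝ}
    (hmax : IsLocalMax (fun w => Real.log (lam w) - Real.log (mu w) + δ * barrier w) z) :
    2 * (mu z * (‖z‖ ^ 2 + 1)) ^ 2 * (Real.log (lam z) - Real.log (mu z)) ≤ 12 * δ := by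
  have hΔ := laplacian_nonpos_of_isLocalMax (contDiffAt_log_sub_log_add_barrier hlam hmu hz δ) hmax
  rw [laplacian_log_sub_log_add_barrier hlam hmu hz δ, sub_nonpos] at hΔ
  have hsq := two_mul_sq_mul_log_sub_le_sq_sub_sq (hlam.2.2 z hz).1 (hmu.2.2 z hz).1
  have hP : 0 < (‖z‖ ^ 2 + 1) ^ 2 := by positivity
  calc 2 * (mu z * (‖z‖ ^ 2 + 1)) ^ 2 * (Real.log (lam z) - Real.log (mu z))
      = (‖z‖ ^ 2 + 1) ^ 2 * (2 * mu z ^ 2 * (Real.log (lam z) - Real.log (mu z))) := by ring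
    _ ≤ (‖z‖ ^ 2 + 1) ^ 2 * (12 * δ / (‖z‖ ^ 2 + 1) ^ 2) := by gcongr; linarith
    _ = 12 * δ := mul_div_cancel₀ _ hP.ne'

theorem IsConfDensityNegOne.le_of_isBoundedUnder
    (hlam : IsConfDensityNegOne lam ({0, 1} : Set ℂ)ᶜ)
    (hmu : IsConfDensityNegOne mu ({0, 1} : Set ℂ)ᶜ)
    (hsub : IsBoundedUnder (· ≤ ·) atPunctures fun z => Real.log (lam z) - Real.log (mu z))
    (hmu_low : IsBoundedUnder (· ≥ ·) atPunctures
      fun z => Real.log (mu z) + Real.log (‖z‖ ^ 2 + 1)) :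
    ∀ z ∈ ({0, 1} : Set ℂ)ᶜ, lam z ≤ mu z := by
  obtain ⟨c, hc, hμc⟩ := hmu.exists_pos_le_mul hmu_low
  intro z₀ hz₀
  by_contra! hlt
  set σ := Real.log (lam z₀) - Real.log (mu z₀)
  have hσ : 0 < σ := sub_pos.2 (Real.log_lt_log (hmu.2.2 z₀ hz₀).1 hlt)
  have hbarrier (z : ℂ) : barrier z ≤ Real.log 2 :=
    (barrier_le z).trans (sub_le_self _ (Real.log_nonneg (by nlinarith [norm_nonneg z])))
  set K := Real.log 2 - barrier z₀
  have hK : 0 ≤ K := sub_nonneg.2 (hbarrier z₀)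
  -- small enough that `2 c² (σ - δ K) > 12 δ`, against the bound at the maximum below
  obtain ⟨δ, hδ, hδK⟩ := exists_pos_mul_lt (by positivity : 0 < 2 * c ^ 2 * σ) (12 + 2 * c ^ 2 * K)
  obtain ⟨C, hC⟩ := hsub.eventually_le
  obtain ⟨zm, hzm, hmax⟩ := ContinuousOn.exists_isMaxOn_of_tendsto_atPunctures
    (fun z hz => (contDiffAt_log_sub_log_add_barrier hlam hmu hz δ).continuousAt.continuousWithinAt)
    (tendsto_atBot_add_left_of_ge' _ C hC (tendsto_barrier_atPunctures.const_mul_atBot hδ))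
  have hbound := sq_mul_log_sub_log_le_of_isLocalMax hlam hmu hzm
    (hmax.isLocalMax (hlam.1.mem_nhds hzm))
  have hu : σ - δ * K ≤ Real.log (lam zm) - Real.log (mu zm) := by
    have hW : Real.log (lam z₀) - Real.log (mu z₀) + δ * barrier z₀ ≤
        Real.log (lam zm) - Real.log (mu zm) + δ * barrier zm := hmax hz₀
    nlinarith [hbarrier zm]
  have hσK : 0 ≤ σ - δ * K := by nlinarith
  have hc2 : c ^ 2 ≤ (mu zm * (‖zm‖ ^ 2 + 1)) ^ 2 := pow_le_pow_left₀ hc.le (hμc zm hzm) 2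
  nlinarith [mul_le_mul hc2 hu hσK (sq_nonneg _)]

end Comparison

section GenHyp

variable {lam mu : ℂ → ℝ} {a1 a2 a3 : ℝ}

lemma IsGenHypDensity.isBoundedUnder_log_sub (hlam : IsGenHypDensity a1 a2 a3 lam)
    (hmu : IsGenHypDensity a1 a2 a3 mu) :
    IsBoundedUnder (· ≤ ·) atPunctures fun z => Real.log (lam z) - Real.log (mu z) := by
  obtain ⟨⟨-, -, hlam_pos⟩, hlam0, hlam1, hlam_inf⟩ := hlam
  obtain ⟨⟨-, -, hmu_pos⟩, hmu0, hmu1, hmu_inf⟩ := hmu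
  refine isBoundedUnder_atPunctures (hlam0.isBoundedUnder_log_sub hmu0)
    (hlam1.isBoundedUnder_log_sub hmu1) ?_
  obtain ⟨C, hC⟩ := (hlam_inf.isBoundedUnder_log_sub hmu_inf).eventually_le
  refine isBoundedUnder_of_eventually_le (a := C) ?_
  filter_upwards [hC, eventually_cocompact_mem_compl] with z hCz hz
  have hz0 : ‖z‖ ^ 2 ≠ 0 := by
    have : z ≠ 0 := fun h => hz (by simp [h])
    positivity
  rwa [Real.log_mul (hlam_pos z hz).1.ne' hz0, Real.log_mul (hmu_pos z hz).1.ne' hz0,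
    add_sub_add_right_eq_sub] at hCz

lemma IsGenHypDensity.isBoundedUnder_log_add_log (ha1 : 0 ≤ a1) (ha2 : 0 ≤ a2) (ha3 : 0 ≤ a3)
    (hmu : IsGenHypDensity a1 a2 a3 mu) :
    IsBoundedUnder (· ≥ ·) atPunctures fun z => Real.log (mu z) + Real.log (‖z‖ ^ 2 + 1) := by
  obtain ⟨⟨-, -, hmu_pos⟩, hmu0, hmu1, hmu_inf⟩ := hmu
  have hfinite {α : ℝ} {p : ℂ} (hα : 0 ≤ α) (h : HasSingOrderAt mu α p) :
      IsBoundedUnder (· ≥ ·) (𝓝[≠] p) fun z => Real.log (mu z) + Real.log (‖z‖ ^ 2 + 1) := by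
    obtain ⟨C, hC⟩ := (h.isBoundedUnder_log hα).eventually_ge
    refine isBoundedUnder_of_eventually_ge (a := C) ?_
    filter_upwards [hC] with z hCz
    linarith [Real.log_nonneg (by nlinarith [norm_nonneg z] : (1 : ℝ) ≤ ‖z‖ ^ 2 + 1)]
  refine isBoundedUnder_atPunctures (hfinite ha1 hmu0) (hfinite ha2 hmu1) ?_
  obtain ⟨C, hC⟩ := (hmu_inf.isBoundedUnder_log ha3).eventually_ge
  refine isBoundedUnder_of_eventually_ge (a := C) ?_
  filter_upwards [hC, eventually_cocompact_mem_compl] with z hCz hz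
  have hz0 : 0 < ‖z‖ ^ 2 := by
    have : z ≠ 0 := fun h => hz (by simp [h])
    positivity
  rw [Real.log_mul (hmu_pos z hz).1.ne' hz0.ne'] at hCz
  linarith [Real.log_le_log hz0 (le_add_of_nonneg_right zero_le_one : ‖z‖ ^ 2 ≤ ‖z‖ ^ 2 + 1)]

end GenHyp

theorem genHyp_unique_general
    (a1 a2 a3 : ℝ) (ha1 : 0 < a1) (ha2 : 0 < a2) (ha3 : 0 < a3)
    (lam mu : ℂ → ℝ)
    (hlam : IsGenHypDensity a1 a2 a3 lam) (hmu : IsGenHypDensity a1 a2 a3 mu) :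
    ∀ z ∈ (({0, 1} : Set ℂ)ᶜ), lam z = mu z := by
  intro z hz
  exact le_antisymm
    (hlam.1.le_of_isBoundedUnder hmu.1 (hlam.isBoundedUnder_log_sub hmu)
      (hmu.isBoundedUnder_log_add_log ha1.le ha2.le ha3.le) z hz)
    (hmu.1.le_of_isBoundedUnder hlam.1 (hmu.isBoundedUnder_log_sub hlam)
      (hlam.isBoundedUnder_log_add_log ha1.le ha2.le ha3.le) z hz)

/-- Uniqueness of the generalized hyperbolic density. -/
theorem genHyp_unique
    (a1 a2 a3 : ℝ) (ha1 : 0 < a1) (ha1' : a1 ≤ 1) (ha2 : 0 < a2) (ha2' : a2 ≤ 1)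
    (ha3 : 0 < a3) (ha3' : a3 ≤ 1) (hsum : 2 < a1 + a2 + a3)
    (lam mu : ℂ → ℝ)
    (hlam : IsGenHypDensity a1 a2 a3 lam) (hmu : IsGenHypDensity a1 a2 a3 mu) :
    ∀ z ∈ (({0, 1} : Set ℂ)ᶜ), lam z = mu z :=
  genHyp_unique_general a1 a2 a3 ha1 ha2 ha3 lam mu hlam hmu
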